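/- For every integer d ≥ 2 and every real number x with |x| ≤ (d−3)/2, the derivative of c_d satisfies |c_d′(x)| < (log d + 3)/(d(d−1)). -/

import Mathlib

/-- The real polynomial `c_d`: for `d = 2j`,
`c_{2j}(x) = (1/(2j)!) ∏_{i=1}^{j} (x² − ((2i−1)/2)²)`, and for `d = 2j+1`,
`c_{2j+1}(x) = (1/(2j+1)!) x ∏_{i=1}^{j} (x² − i²)`. -/
noncomputable def c (d : ℕ) (x : ℝ) : ℝ :=
  if d % 2 = 0 then
    (1 / (d.factorial : ℝ)) * ∏ i ∈ Finset.Icc 1 (d / 2), (x ^ 2 - ((2 * (i : ℝ) - 1) / 2) ^ 2)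
  else
    (1 / (d.factorial : ℝ)) * x * ∏ i ∈ Finset.Icc 1 (d / 2), (x ^ 2 - (i : ℝ) ^ 2)

/-- The real polynomial `s_d`: `s_{2k}(x) = Σ_{j=0}^{k} (−1)^{k−j} c_{2j}(x)` and
`s_{2k+1}(x) = Σ_{j=0}^{k} (−1)^{k−j} c_{2j+1}(x)`. -/
noncomputable def s (d : ℕ) (x : ℝ) : ℝ :=
  ∑ j ∈ Finset.range (d / 2 + 1), (-1 : ℝ) ^ (d / 2 - j) * c (2 * j + d % 2) x

lemma prod_even (j : ℕ) (x : ℝ) :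
    ∏ i ∈ Finset.range (2*j), (x + (2*(j:ℝ)-1)/2 - i)
      = ∏ i ∈ Finset.Icc 1 j, (x^2 - ((2*(i:ℝ)-1)/2)^2) := by
  induction j with
  | zero => simp
  | succ j ih =>
    have h2 : 2*(j+1) = (2*j + 1) + 1 := by ring
    rw [h2, Finset.prod_range_succ, Finset.prod_range_succ',
      Finset.prod_Icc_succ_top (Nat.le_add_left 1 j)]
    have hcong : ∀ i ∈ Finset.range (2*j),
        (x + (2*((j+1:ℕ):ℝ)-1)/2 - ((i+1 : ℕ):ℝ)) = (x + (2*(j:ℝ)-1)/2 - i) := by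
      intro i _; push_cast; ring
    rw [Finset.prod_congr rfl hcong]
    push_cast [ih]
    ring

lemma prod_odd (j : ℕ) (x : ℝ) :
    ∏ i ∈ Finset.range (2*j+1), (x + (j:ℝ) - i)
      = x * ∏ i ∈ Finset.Icc 1 j, (x^2 - (i:ℝ)^2) := by
  induction j with
  | zero => simp
  | succ j ih =>
    have h2 : 2*(j+1)+1 = (2*j + 1 + 1) + 1 := by ring
    rw [h2, Finset.prod_range_succ, Finset.prod_range_succ',
      Finset.prod_Icc_succ_top (Nat.le_add_left 1 j)]
    have hcong : ∀ i ∈ Finset.range (2*j+1),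
        (x + ((j+1:ℕ):ℝ) - ((i+1 : ℕ):ℝ)) = (x + (j:ℝ) - i) := by
      intro i _; push_cast; ring
    rw [Finset.prod_congr rfl hcong]
    push_cast [ih]
    ring

lemma c_eq_prod (d : ℕ) (x : ℝ) :
    c d x = (1 / (d.factorial : ℝ)) * ∏ i ∈ Finset.range d, (x + ((d:ℝ)-1)/2 - i) := by
  rcases Nat.even_or_odd d with ⟨j, hj⟩ | ⟨j, hj⟩
  · subst hj
    have h2 : j + j = 2 * j := by ring
    rw [c, h2]
    have hmod : 2 * j % 2 = 0 := by omega
    have hdiv : 2 * j / 2 = j := by omega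
    rw [if_pos hmod, hdiv, ← prod_even j x]
    congr 2
    funext i
    push_cast
    ring
  · subst hj
    rw [c]
    have hmod : (2 * j + 1) % 2 ≠ 0 := by omega
    have hdiv : (2 * j + 1) / 2 = j := by omega
    rw [if_neg hmod, hdiv, mul_assoc, ← prod_odd j x]
    congr 2
    funext i
    push_cast
    ring

lemma hasDerivAt_c (d : ℕ) (x : ℝ) :
    HasDerivAt (c d)
      ((1 / (d.factorial : ℝ)) *
        ∑ j ∈ Finset.range d, ∏ i ∈ (Finset.range d).erase j, (x + ((d:ℝ)-1)/2 - i)) x := by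
  have hfun : c d = fun x : ℝ =>
      (1 / (d.factorial : ℝ)) * ∏ i ∈ Finset.range d, (x + ((d:ℝ)-1)/2 - i) :=
    funext fun x => c_eq_prod d x
  rw [hfun]
  have h : ∀ i ∈ Finset.range d,
      HasDerivAt (fun x : ℝ => x + ((d:ℝ)-1)/2 - (i:ℝ)) 1 x := by
    intro i _
    simpa using ((hasDerivAt_id x).add_const (((d:ℝ)-1)/2)).sub_const (i:ℝ)
  have := (HasDerivAt.finset_prod h).const_mul (1 / (d.factorial : ℝ))
  simpa using this

lemma fact_fact_le (a b : ℕ) (ha : 2 ≤ a) (hb : 2 ≤ b) :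
    a.factorial * b.factorial ≤ 2 * (a + b - 2).factorial := by
  obtain ⟨m, rfl⟩ : ∃ m, a = m + 2 := ⟨a - 2, by omega⟩
  induction b, hb using Nat.le_induction with
  | base =>
    have h : m + 2 + 2 - 2 = m + 2 := by omega
    rw [h, show Nat.factorial 2 = 2 from rfl]
    omega
  | succ b hb ih =>
    have h1 : m + 2 + (b + 1) - 2 = (m + b) + 1 := by omega
    have h2 : m + 2 + b - 2 = m + b := by omega
    rw [h1, Nat.factorial_succ (m+b), Nat.factorial_succ b]
    rw [h2] at ih
    calc (m+2).factorial * ((b+1) * b.factorial)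
        = (b+1) * ((m+2).factorial * b.factorial) := by ring
      _ ≤ (b+1) * (2 * (m+b).factorial) := Nat.mul_le_mul_left _ ih
      _ ≤ (m+b+1) * (2 * (m+b).factorial) := Nat.mul_le_mul_right _ (by omega)
      _ = 2 * ((m+b+1) * (m+b).factorial) := by ring

lemma key (d k : ℕ) (hd : 4 ≤ d) (hk1 : 1 ≤ k) (hk3 : k ≤ d - 3)
    (y : ℝ) (hky : (k:ℝ) ≤ y) (hyk : y ≤ (k:ℝ) + 1) :
    |∑ j ∈ Finset.range d, ∏ i ∈ (Finset.range d).erase j, (y - i)| ≤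
      2 * ((d-2).factorial : ℝ) * (1 + Real.log d / 2) := by
  classical
  set b : ℕ → ℝ := fun i => if i ≤ k then (k:ℝ)+1-i else (i:ℝ)-k with hbdef
  set w : ℕ → ℝ := fun i => if i = k ∨ i = k+1 then |y - i| else b i with hwdef
  have hkd : k + 1 < d := by omega
  have hkmem : k ∈ Finset.range d := Finset.mem_range.mpr (by omega)
  have hk1mem : k+1 ∈ Finset.range d := Finset.mem_range.mpr hkd
  -- basic bounds on b
  have hb1 : ∀ i, (1:ℝ) ≤ b i := by
    intro i
    simp only [hbdef]
    split_ifs with h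
    · have : (i:ℝ) ≤ k := Nat.cast_le.mpr h
      linarith
    · have : (k:ℝ) + 1 ≤ i := by exact_mod_cast Nat.succ_le_of_lt (not_le.mp h)
      linarith
  have hb0 : ∀ i, (0:ℝ) ≤ b i := fun i => le_trans zero_le_one (hb1 i)
  have hbne : ∀ i, b i ≠ 0 := fun i => ne_of_gt (lt_of_lt_of_le zero_lt_one (hb1 i))
  have hw0 : ∀ i, (0:ℝ) ≤ w i := by
    intro i
    simp only [hwdef]
    split_ifs
    · exact abs_nonneg _
    · exact hb0 i
  have hbk : b k = 1 := by simp only [hbdef, if_pos le_rfl]; ring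
  have hbk1 : b (k+1) = 1 := by
    simp only [hbdef]
    rw [if_neg (by omega)]
    push_cast
    ring
  -- |y - i| ≤ w i
  have habs : ∀ i : ℕ, |y - (i:ℝ)| ≤ w i := by
    intro i
    simp only [hwdef]
    split_ifs with h
    · exact le_rfl
    · push_neg at h
      simp only [hbdef]
      split_ifs with h2
      · have : (i:ℝ) ≤ k := Nat.cast_le.mpr h2
        rw [abs_of_nonneg (by linarith)]
        linarith
      · have : (k:ℝ) + 2 ≤ i := by exact_mod_cast (show k + 2 ≤ i by omega)
        rw [abs_of_nonpos (by linarith)]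
        linarith
  set C : ℝ := ∏ i ∈ Finset.range d, b i with hCdef
  have hC0 : 0 ≤ C := Finset.prod_nonneg fun i _ => hb0 i
  -- the doubly erased set
  set E2 : Finset ℕ := ((Finset.range d).erase k).erase (k+1) with hE2def
  have hk1memE : k + 1 ∈ (Finset.range d).erase k := Finset.mem_erase.mpr ⟨by omega, hk1mem⟩
  have hE2b : ∏ i ∈ E2, b i = C := by
    have h1 : C = b k * ∏ i ∈ (Finset.range d).erase k, b i :=
      (Finset.mul_prod_erase _ b hkmem).symm
    have h2 : ∏ i ∈ (Finset.range d).erase k, b i = b (k+1) * ∏ i ∈ E2, b i :=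
      (Finset.mul_prod_erase _ b hk1memE).symm
    rw [h1, h2, hbk, hbk1, one_mul, one_mul]
  have hwE2 : ∀ (s : Finset ℕ), s ⊆ E2 → ∏ i ∈ s, w i = ∏ i ∈ s, b i := by
    intro s hs
    refine Finset.prod_congr rfl fun i hi => ?_
    have hi2 := hs hi
    rw [hE2def] at hi2
    have h1 : i ≠ k + 1 := (Finset.mem_erase.mp hi2).1
    have h2 : i ≠ k := (Finset.mem_erase.mp (Finset.mem_erase.mp hi2).2).1
    simp only [hwdef]
    rw [if_neg (by tauto)]
  -- value of the w-products
  have hwk1 : w (k+1) = |y - ((k:ℝ)+1)| := by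
    have : w (k+1) = |y - ((k+1:ℕ):ℝ)| := by
      rw [hwdef]
      exact if_pos (Or.inr rfl)
    rw [this]
    push_cast
    ring_nf
  have hwk : w k = |y - (k:ℝ)| := by
    rw [hwdef]
    exact if_pos (Or.inl rfl)
  have hterm_k : ∏ i ∈ (Finset.range d).erase k, w i = |y - ((k:ℝ)+1)| * C := by
    rw [← Finset.mul_prod_erase _ w hk1memE, hwk1, ← hE2def, hwE2 E2 (le_refl _), hE2b]
  have hkmemE' : k ∈ (Finset.range d).erase (k+1) := Finset.mem_erase.mpr ⟨by omega, hkmem⟩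
  have hterm_k1 : ∏ i ∈ (Finset.range d).erase (k+1), w i = |y - (k:ℝ)| * C := by
    rw [← Finset.mul_prod_erase _ w hkmemE', hwk]
    congr 1
    rw [Finset.erase_right_comm, ← hE2def, hwE2 E2 (le_refl _), hE2b]
  -- other terms
  have hterm_other : ∀ j ∈ E2, ∏ i ∈ (Finset.range d).erase j, w i ≤ (1/4) * (C / b j) := by
    intro j hj
    have hjk : j ≠ k+1 := (Finset.mem_erase.mp hj).1
    have hjk2 : j ≠ k := (Finset.mem_erase.mp (Finset.mem_erase.mp hj).2).1
    have hjd : j ∈ Finset.range d := Finset.mem_of_mem_erase (Finset.mem_of_mem_erase hj)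
    have hkmemj : k ∈ (Finset.range d).erase j := Finset.mem_erase.mpr ⟨Ne.symm hjk2, hkmem⟩
    have hk1memj : k+1 ∈ ((Finset.range d).erase j).erase k :=
      Finset.mem_erase.mpr ⟨by omega, Finset.mem_erase.mpr ⟨Ne.symm hjk, hk1mem⟩⟩
    set F : Finset ℕ := (((Finset.range d).erase j).erase k).erase (k+1) with hFdef
    have hFsub : F ⊆ E2 := by
      intro i hi
      rw [hFdef] at hi
      rw [hE2def]
      have h1 := Finset.mem_erase.mp hi
      have h2 := Finset.mem_erase.mp h1.2
      have h3 := Finset.mem_erase.mp h2.2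
      exact Finset.mem_erase.mpr ⟨h1.1, Finset.mem_erase.mpr ⟨h2.1, h3.2⟩⟩
    have hFb : ∏ i ∈ F, b i = C / b j := by
      have h1 : C = b j * ∏ i ∈ (Finset.range d).erase j, b i :=
        (Finset.mul_prod_erase _ b hjd).symm
      have h2 : ∏ i ∈ (Finset.range d).erase j, b i
          = b k * ∏ i ∈ ((Finset.range d).erase j).erase k, b i :=
        (Finset.mul_prod_erase _ b hkmemj).symm
      have h3 : ∏ i ∈ ((Finset.range d).erase j).erase k, b i = b (k+1) * ∏ i ∈ F, b i :=
        (Finset.mul_prod_erase _ b hk1memj).symm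
      rw [h2, h3, hbk, hbk1, one_mul, one_mul] at h1
      rw [eq_div_iff (hbne j), h1]
      ring
    have hexpand : ∏ i ∈ (Finset.range d).erase j, w i
        = |y - (k:ℝ)| * (|y - ((k:ℝ)+1)| * ∏ i ∈ F, w i) := by
      rw [← Finset.mul_prod_erase _ w hkmemj, hwk, ← Finset.mul_prod_erase _ w hk1memj, hwk1]
    rw [hexpand, hwE2 F hFsub, hFb]
    have hq : |y - (k:ℝ)| * |y - ((k:ℝ)+1)| ≤ 1/4 := by
      rw [abs_of_nonneg (by linarith), abs_of_nonpos (by linarith)]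
      nlinarith [sq_nonneg (y - (k:ℝ) - 1/2)]
    have hFpos : (0:ℝ) ≤ C / b j := div_nonneg hC0 (hb0 j)
    calc |y - (k:ℝ)| * (|y - ((k:ℝ)+1)| * (C / b j))
        = (|y - (k:ℝ)| * |y - ((k:ℝ)+1)|) * (C / b j) := by ring
      _ ≤ (1/4) * (C / b j) := mul_le_mul_of_nonneg_right hq hFpos
    -- sum splitting
  have hsum_split : ∑ j ∈ Finset.range d, ∏ i ∈ (Finset.range d).erase j, w i
      = (∏ i ∈ (Finset.range d).erase k, w i) + ((∏ i ∈ (Finset.range d).erase (k+1), w i)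
        + ∑ j ∈ E2, ∏ i ∈ (Finset.range d).erase j, w i) := by
    rw [← Finset.add_sum_erase _ _ hkmem, ← Finset.add_sum_erase _ _ hk1memE]
  have habs1 : |y - ((k:ℝ)+1)| + |y - (k:ℝ)| = 1 := by
    rw [abs_of_nonpos (by linarith), abs_of_nonneg (by linarith)]
    ring
  -- harmonic sums
  have hharm : ∀ n : ℕ, (harmonic n : ℝ) = ∑ i ∈ Finset.range n, ((i:ℝ)+1)⁻¹ := by
    intro n
    rw [harmonic]
    push_cast
    rfl
  have hsumA : ∑ j ∈ Finset.range (k+1), (b j)⁻¹ = (harmonic (k+1) : ℝ) := by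
    have h1 : ∑ j ∈ Finset.range (k+1), (b j)⁻¹
        = ∑ j ∈ Finset.range (k+1), (fun m : ℕ => ((m:ℝ)+1)⁻¹) (k+1-1-j) := by
      refine Finset.sum_congr rfl fun j hj => ?_
      have hjk : j ≤ k := by
        have := Finset.mem_range.mp hj
        omega
      have h2 : k + 1 - 1 - j = k - j := by omega
      rw [h2]
      have h3 : ((k - j : ℕ) : ℝ) = (k:ℝ) - j := by
        push_cast [Nat.cast_sub hjk]
        ring
      simp only [hbdef, if_pos hjk, h3]
      congr 1
      ring
    rw [h1, Finset.sum_range_reflect (fun m : ℕ => ((m:ℝ)+1)⁻¹) (k+1), hharm]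
  have hsumB : ∑ j ∈ Finset.Ico (k+1) d, (b j)⁻¹ = (harmonic (d-1-k) : ℝ) := by
    rw [Finset.sum_Ico_eq_sum_range, hharm]
    have hd1 : d - (k+1) = d - 1 - k := by omega
    rw [hd1]
    refine Finset.sum_congr rfl fun i hi => ?_
    have : ¬ (k + 1 + i ≤ k) := by omega
    simp only [hbdef, if_neg this]
    push_cast
    congr 1
    ring
  have hsum_all : ∑ j ∈ Finset.range d, (b j)⁻¹
      = (harmonic (k+1) : ℝ) + (harmonic (d-1-k) : ℝ) := by
    rw [Finset.range_eq_Ico,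
      ← Finset.sum_Ico_consecutive _ (Nat.zero_le (k+1)) (le_of_lt hkd),
      ← Finset.range_eq_Ico, hsumA, hsumB]
  have hE2sum : ∑ j ∈ E2, (b j)⁻¹ = (∑ j ∈ Finset.range d, (b j)⁻¹) - 2 := by
    have h1 : ∑ j ∈ Finset.range d, (b j)⁻¹
        = (b k)⁻¹ + ∑ j ∈ (Finset.range d).erase k, (b j)⁻¹ :=
      (Finset.add_sum_erase _ _ hkmem).symm
    have h2 : ∑ j ∈ (Finset.range d).erase k, (b j)⁻¹
        = (b (k+1))⁻¹ + ∑ j ∈ E2, (b j)⁻¹ :=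
      (Finset.add_sum_erase _ _ hk1memE).symm
    rw [h1, h2, hbk, hbk1]
    ring
  have hlogd : (0:ℝ) ≤ Real.log d := Real.log_nonneg (by exact_mod_cast (by omega : 1 ≤ d))
  have hlogmono : ∀ n : ℕ, 1 ≤ n → n ≤ d → Real.log n ≤ Real.log d := by
    intro n h1 h2
    exact Real.log_le_log (by exact_mod_cast h1) (by exact_mod_cast h2)
  have hsig : ∑ j ∈ E2, (b j)⁻¹ ≤ 2 * Real.log d := by
    rw [hE2sum, hsum_all]
    have hA := harmonic_le_one_add_log (k+1)
    have hB := harmonic_le_one_add_log (d-1-k)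
    have hA2 : Real.log (k+1) ≤ Real.log d := by
      have := hlogmono (k+1) (by omega) (by omega)
      push_cast at this ⊢
      exact this
    have hB2 : Real.log ((d-1-k : ℕ) : ℝ) ≤ Real.log d := hlogmono (d-1-k) (by omega) (by omega)
    push_cast at hA
    linarith
  have hsum_w : ∑ j ∈ Finset.range d, ∏ i ∈ (Finset.range d).erase j, w i
      ≤ C * (1 + Real.log d / 2) := by
    rw [hsum_split, hterm_k, hterm_k1]
    have h1 : ∑ j ∈ E2, ∏ i ∈ (Finset.range d).erase j, w i
        ≤ ∑ j ∈ E2, (1/4) * (C / b j) := Finset.sum_le_sum hterm_other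
    have h2 : ∑ j ∈ E2, (1/4) * (C / b j) = (C/4) * ∑ j ∈ E2, (b j)⁻¹ := by
      rw [Finset.mul_sum]
      refine Finset.sum_congr rfl fun j _ => ?_
      rw [div_eq_mul_inv]
      ring
    have h3 : (C/4) * ∑ j ∈ E2, (b j)⁻¹ ≤ (C/4) * (2 * Real.log d) :=
      mul_le_mul_of_nonneg_left hsig (by linarith)
    have h4 : |y - ((k:ℝ)+1)| * C + |y - (k:ℝ)| * C = C := by
      rw [← add_mul, habs1, one_mul]
    nlinarith [h1, h2, h3, h4]
  -- value of C
  have hCfact : C = (((k+1).factorial : ℕ) : ℝ) * (((d-1-k).factorial : ℕ) : ℝ) := by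
    rw [hCdef, Finset.range_eq_Ico,
      ← Finset.prod_Ico_consecutive _ (Nat.zero_le (k+1)) (le_of_lt hkd),
      ← Finset.range_eq_Ico]
    have hA : ∏ i ∈ Finset.range (k+1), b i = (((k+1).factorial : ℕ) : ℝ) := by
      have h1 : ∏ i ∈ Finset.range (k+1), b i
          = ∏ i ∈ Finset.range (k+1), (fun m : ℕ => ((m:ℝ)+1)) (k+1-1-i) := by
        refine Finset.prod_congr rfl fun j hj => ?_
        have hjk : j ≤ k := by
          have := Finset.mem_range.mp hj
          omega
        have h2 : k + 1 - 1 - j = k - j := by omega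
        rw [h2]
        have h3 : ((k - j : ℕ) : ℝ) = (k:ℝ) - j := by
          push_cast [Nat.cast_sub hjk]
          ring
        simp only [hbdef, if_pos hjk, h3]
        ring
      rw [h1, Finset.prod_range_reflect (fun m : ℕ => ((m:ℝ)+1)) (k+1)]
      rw [← Finset.prod_range_add_one_eq_factorial (k+1)]
      push_cast
      rfl
    have hB : ∏ i ∈ Finset.Ico (k+1) d, b i = (((d-1-k).factorial : ℕ) : ℝ) := by
      rw [Finset.prod_Ico_eq_prod_range]
      have hd1 : d - (k+1) = d - 1 - k := by omega
      rw [hd1]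
      have h1 : ∏ i ∈ Finset.range (d-1-k), b (k+1+i)
          = ∏ i ∈ Finset.range (d-1-k), ((i:ℝ)+1) := by
        refine Finset.prod_congr rfl fun i _ => ?_
        have : ¬ (k + 1 + i ≤ k) := by omega
        simp only [hbdef, if_neg this]
        push_cast
        ring
      rw [h1, ← Finset.prod_range_add_one_eq_factorial (d-1-k)]
      push_cast
      rfl
    rw [hA, hB]
  have hCle : C ≤ 2 * (((d-2).factorial : ℕ) : ℝ) := by
    rw [hCfact]
    have h1 : (k+1).factorial * (d-1-k).factorial ≤ 2 * (d-2).factorial := by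
      have := fact_fact_le (k+1) (d-1-k) (by omega) (by omega)
      have h2 : (k+1) + (d-1-k) - 2 = d - 2 := by omega
      rwa [h2] at this
    exact_mod_cast h1
  -- conclusion
  calc |∑ j ∈ Finset.range d, ∏ i ∈ (Finset.range d).erase j, (y - (i:ℝ))|
      ≤ ∑ j ∈ Finset.range d, |∏ i ∈ (Finset.range d).erase j, (y - (i:ℝ))| :=
        Finset.abs_sum_le_sum_abs _ _
    _ ≤ ∑ j ∈ Finset.range d, ∏ i ∈ (Finset.range d).erase j, w i := by
        refine Finset.sum_le_sum fun j _ => ?_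
        rw [Finset.abs_prod]
        exact Finset.prod_le_prod (fun i _ => abs_nonneg _) (fun i _ => habs i)
    _ ≤ C * (1 + Real.log d / 2) := hsum_w
    _ ≤ 2 * ((d-2).factorial : ℝ) * (1 + Real.log d / 2) := by
        apply mul_le_mul_of_nonneg_right hCle
        linarith

lemma cast_factorial_eq (d : ℕ) (hd : 2 ≤ d) :
    (d.factorial : ℝ) = (d:ℝ) * ((d:ℝ)-1) * (((d-2).factorial : ℕ) : ℝ) := by
  obtain ⟨e, rfl⟩ : ∃ e, d = e + 2 := ⟨d-2, by omega⟩
  have h : e + 2 - 2 = e := by omega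
  have h2 : (e+2).factorial = (e+2) * ((e+1) * e.factorial) := by
    rw [show e+2 = (e+1)+1 from rfl, Nat.factorial_succ, Nat.factorial_succ]
  rw [h, h2]
  push_cast
  ring

/-- `|c_d′(x)| < (log d + 3)/(d(d−1))` for `|x| ≤ (d−3)/2`. -/
theorem abs_deriv_c_lt' (d : ℕ) (hd : 2 ≤ d) (x : ℝ)
    (hx : |x| ≤ ((d : ℝ) - 3) / 2) :
    |deriv (c d) x| < (Real.log d + 3) / ((d : ℝ) * ((d : ℝ) - 1)) := by
  have hd2 : d ≠ 2 := by
    rintro rfl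
    have h0 : (0:ℝ) ≤ |x| := abs_nonneg x
    norm_num at hx
    linarith
  rcases eq_or_ne d 3 with rfl | hd3
  · -- d = 3 : then x = 0
    have hx0 : x = 0 := by
      have h0 : |x| ≤ 0 := by
        have : ((3:ℕ):ℝ) = 3 := by norm_num
        rw [this] at hx
        linarith [hx]
      exact abs_eq_zero.mp (le_antisymm h0 (abs_nonneg x))
    subst hx0
    rw [(hasDerivAt_c 3 0).deriv]
    have hr : Finset.range 3 = {0, 1, 2} := by decide
    have e0 : ({0,1,2} : Finset ℕ).erase 0 = {1, 2} := by decide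
    have e1 : ({0,1,2} : Finset ℕ).erase 1 = {0, 2} := by decide
    have e2 : ({0,1,2} : Finset ℕ).erase 2 = {0, 1} := by decide
    rw [hr, Finset.sum_insert (by decide), Finset.sum_insert (by decide),
      Finset.sum_singleton, e0, e1, e2,
      Finset.prod_insert (by decide), Finset.prod_singleton,
      Finset.prod_insert (by decide), Finset.prod_singleton,
      Finset.prod_insert (by decide), Finset.prod_singleton]
    have hlog3 : (0:ℝ) < Real.log 3 := Real.log_pos (by norm_num)
    have h6 : ((Nat.factorial 3 : ℕ):ℝ) = 6 := by norm_num [Nat.factorial]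
    norm_num [h6]
    rw [lt_div_iff₀ (by norm_num : (0:ℝ) < 6)]
    linarith
  · -- main case : d ≥ 4
    have hd4 : 4 ≤ d := by omega
    have hdr : (4:ℝ) ≤ d := by exact_mod_cast hd4
    obtain ⟨hx1, hx2⟩ := abs_le.mp hx
    set y := x + ((d:ℝ)-1)/2 with hy
    have hy1 : (1:ℝ) ≤ y := by rw [hy]; linarith
    have hy2 : y ≤ (d:ℝ) - 2 := by rw [hy]; linarith
    have hy0 : (0:ℝ) ≤ y := by linarith
    set k := min ⌊y⌋₊ (d-3) with hk
    have hk3 : k ≤ d - 3 := min_le_right _ _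
    have hk1 : 1 ≤ k := le_min (Nat.le_floor (by exact_mod_cast hy1)) (by omega)
    have hky : (k:ℝ) ≤ y :=
      le_trans (Nat.cast_le.mpr (min_le_left _ _)) (Nat.floor_le hy0)
    have hyk : y ≤ (k:ℝ) + 1 := by
      rcases le_or_gt ⌊y⌋₊ (d-3) with h | h
      · rw [hk, min_eq_left h]
        exact le_of_lt (Nat.lt_floor_add_one y)
      · rw [hk, min_eq_right (le_of_lt h)]
        have h3 : ((d-3:ℕ):ℝ) = (d:ℝ) - 3 := by
          push_cast [Nat.cast_sub (by omega : 3 ≤ d)]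
          ring
        rw [h3]
        linarith
    have hkey := key d k hd4 hk1 hk3 y hky hyk
    rw [(hasDerivAt_c d x).deriv, ← hy]
    have hfacpos : (0:ℝ) < (d.factorial : ℝ) := by
      exact_mod_cast d.factorial_pos
    have hD : (0:ℝ) < (d:ℝ) * ((d:ℝ) - 1) := by nlinarith
    have hlogd : (0:ℝ) ≤ Real.log d := Real.log_nonneg (by linarith)
    rw [abs_mul, abs_of_pos (by positivity : (0:ℝ) < 1/(d.factorial:ℝ))]
    have hfacteq := cast_factorial_eq d hd
    calc (1/(d.factorial:ℝ)) *
          |∑ j ∈ Finset.range d, ∏ i ∈ (Finset.range d).erase j, (y - (i:ℝ))|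
        ≤ (1/(d.factorial:ℝ)) * (2 * (((d-2).factorial : ℕ):ℝ) * (1 + Real.log d / 2)) := by
          apply mul_le_mul_of_nonneg_left hkey
          positivity
      _ = (Real.log d + 2) / ((d:ℝ) * ((d:ℝ) - 1)) := by
          rw [hfacteq]
          have hfp : (0:ℝ) < (((d-2).factorial : ℕ):ℝ) := by
            exact_mod_cast (d-2).factorial_pos
          field_simp
          ring
      _ < (Real.log d + 3) / ((d:ℝ) * ((d:ℝ) - 1)) := by
          exact (div_lt_div_iff_of_pos_right hD).mpr (by linarith)
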